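/- arXiv:1507.05650 — 5 statements merged into one kernel-verified Lean document; each statement's English description precedes it below -/
import Mathlib

section
/- Let k ≥ 0 and n = 2k+1. The map from (ZMod n) × {0, 1, …, k} to the set Sym2 (ZMod n) of unordered pairs of elements of ZMod n, sending (i, h) to the unordered pair {i, i+h}, is a bijection. -/
/-- Let `k ≥ 0` and `n = 2k+1`. The map
`(ZMod n) × {0,…,k} → Sym2 (ZMod n)`, `(i, h) ↦ {i, i + h}`, is a bijection. -/
theorem cyclic_pair_bijection (k : ℕ) :
    Function.Bijective
      (fun p : ZMod (2 * k + 1) × Fin (k + 1) =>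
        s(p.1, p.1 + ((p.2 : ℕ) : ZMod (2 * k + 1)))) := by
  have hn : 0 < 2 * k + 1 := by omega
  rw [Fintype.bijective_iff_injective_and_card]
  constructor
  · rintro ⟨i, h⟩ ⟨i', h'⟩ heq
    simp only [Sym2.eq, Sym2.rel_iff', Prod.mk.injEq, Prod.swap_prod_mk] at heq
    have hlt : (h : ℕ) < 2 * k + 1 := by omega
    have hlt' : (h' : ℕ) < 2 * k + 1 := by omega
    rcases heq with ⟨h1, h2⟩ | ⟨h1, h2⟩
    · subst h1
      have : ((h : ℕ) : ZMod (2 * k + 1)) = ((h' : ℕ) : ZMod (2 * k + 1)) := by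
        have := add_left_cancel h2
        exact this
      have : (h : ℕ) = (h' : ℕ) := by
        have := congrArg ZMod.val this
        rwa [ZMod.val_cast_of_lt hlt, ZMod.val_cast_of_lt hlt'] at this
      exact Prod.ext rfl (Fin.ext this)
    · -- i = i' + h', i + h = i'
      have hz : (((h : ℕ) + (h' : ℕ) : ℕ) : ZMod (2 * k + 1)) = 0 := by
        push_cast
        have : i' + ((h' : ℕ) : ZMod (2 * k + 1)) + ((h : ℕ) : ZMod (2 * k + 1)) = i' := by
          rw [← h1]; exact h2
        linear_combination this - (1 : ZMod (2*k+1)) * congrArg id (rfl : i' = i')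
      have hsum : (h : ℕ) + (h' : ℕ) = 0 := by
        have hlt2 : (h : ℕ) + (h' : ℕ) < 2 * k + 1 := by omega
        have := congrArg ZMod.val hz
        rwa [ZMod.val_cast_of_lt hlt2, ZMod.val_zero] at this
      have hh : (h : ℕ) = 0 := by omega
      have hh' : (h' : ℕ) = 0 := by omega
      have : i = i' := by
        rw [h1, hh', Nat.cast_zero, add_zero]
      exact Prod.ext this (Fin.ext (hh.trans hh'.symm))
  · have : NeZero (2 * k + 1) := ⟨by omega⟩
    rw [Fintype.card_prod, ZMod.card, Fintype.card_fin, Sym2.card, ZMod.card, Nat.choose_two_right]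
    have h2 : (2*k+1+1)*(2*k+1+1-1) = ((2*k+1)*(k+1))*2 := by
      have h3 : 2*k+1+1-1 = 2*k+1 := rfl
      rw [h3]; ring
    omega
end

section
/- Let k ≥ 0, n = 2k+1, and m = n+1. Let w be a weight function on m vertices with cut function δ_w. Identify ZMod n with the first n elements of Fin m, and for i ∈ ZMod n set Q_i = {i, i+1, …, i+k} and Q'_i = {i+1, …, i+k} (indices taken mod n), viewed as subsets of Fin m. Then ∑_{i ∈ ZMod n} (δ_w(Q_i) − δ_w(Q'_i)) = δ_w(N), where N ⊆ Fin m is the set of all first n vertices. -/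
/-- A weight function on `m` vertices: symmetric, nonnegative, vanishing on the diagonal. -/
def IsWeight {m : ℕ} (w : Fin m → Fin m → ℝ) : Prop :=
  (∀ i j, w i j = w j i) ∧ (∀ i j, 0 ≤ w i j) ∧ ∀ i, w i i = 0

/-- The cut function of a weight function: `δ_w(I) = ∑_{i ∈ I} ∑_{j ∉ I} w i j`. -/
def cut {m : ℕ} (w : Fin m → Fin m → ℝ) (I : Finset (Fin m)) : ℝ :=
  ∑ i ∈ I, ∑ j ∈ Iᶜ, w i j

/-- The Bell vector `β_{ij}`: value `1` on subsets containing exactly one of `i, j`, else `0`. -/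
def bell {m : ℕ} (i j : Fin m) (I : Finset (Fin m)) : ℝ :=
  haveI : Decidable (Xor' (i ∈ I) (j ∈ I)) :=
    inferInstanceAs (Decidable ((i ∈ I ∧ ¬j ∈ I) ∨ (j ∈ I ∧ ¬i ∈ I)))
  if Xor' (i ∈ I) (j ∈ I) then 1 else 0

/-- The identification of `ZMod (2k+1)` with the first `2k+1` elements of `Fin (2k+2)`. -/
def emb (k : ℕ) (x : ZMod (2 * k + 1)) : Fin (2 * k + 2) :=
  ⟨x.val, by have := x.val_lt; omega⟩

/-- `Q_i = {i, i+1, …, i+k}` (indices mod `n = 2k+1`), as a subset of `Fin (2k+2)`. -/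
def Qset (k : ℕ) (i : ZMod (2 * k + 1)) : Finset (Fin (2 * k + 2)) :=
  (Finset.range (k + 1)).image (fun h : ℕ => emb k (i + (h : ZMod (2 * k + 1))))

/-- `Q'_i = {i+1, …, i+k}` (indices mod `n = 2k+1`), as a subset of `Fin (2k+2)`. -/
def Qset' (k : ℕ) (i : ZMod (2 * k + 1)) : Finset (Fin (2 * k + 2)) :=
  (Finset.Icc 1 k).image (fun h : ℕ => emb k (i + (h : ZMod (2 * k + 1))))

/-- `N`, the set of all first `n = 2k+1` vertices of `Fin (2k+2)`. -/
def Nset (k : ℕ) : Finset (Fin (2 * k + 2)) :=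
  Finset.univ.image (emb k)

/-! Adding the vertex `i` to `Q'_i` changes the cut by `deg i - w i i - 2 ∑_{h=1}^{k} w i (i+h)`.
Every nonzero residue mod `2k+1` is `±h` for exactly one `h ∈ [1, k]`, so by symmetry of `w`,
twice `∑_i ∑_{h=1}^{k} w i (i+h)` is the sum of `w x y` over the ordered pairs of distinct
`x, y ∈ N`. With the diagonal terms, the total is `∑_{x ∈ N} deg x - ∑_{x, y ∈ N} w x y`,
which is `δ_w(N)`. -/

open Finset

lemma ZMod.natCast_injOn_Iio (n : ℕ) : Set.InjOn (Nat.cast : ℕ → ZMod n) (Set.Iio n) :=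
  fun a ha b hb h => by
    simpa [ZMod.val_natCast_of_lt ha, ZMod.val_natCast_of_lt hb] using congrArg ZMod.val h

lemma ZMod.sum_eq_sum_range {M : Type*} [AddCommMonoid M] (n : ℕ) [NeZero n] (f : ZMod n → M) :
    ∑ d, f d = ∑ j ∈ range n, f j := by
  rw [← sum_image fun a ha b hb =>
    ZMod.natCast_injOn_Iio n (by simpa using ha) (by simpa using hb)]
  congr 1
  ext d
  simpa using ⟨d.val, d.val_lt, ZMod.natCast_zmod_val d⟩

lemma sum_Icc_one_eq_sum_range {M : Type*} [AddCommMonoid M] (k : ℕ) (f : ℕ → M) :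
    ∑ h ∈ Icc 1 k, f h = ∑ x ∈ range k, f (x + 1) := by
  rw [range_eq_Ico, sum_Ico_add', ← Ico_add_one_right_eq_Icc, zero_add]

lemma Function.Even.sum_zmod_two_mul_add_one {M : Type*} [AddCommMonoid M] {k : ℕ}
    {f : ZMod (2 * k + 1) → M} (hf : f.Even) :
    ∑ d, f d = f 0 + 2 • ∑ h ∈ Icc 1 k, f h := by
  have upper_half :
      ∑ x ∈ range k, f ↑(k + 1 + (k - 1 - x)) = ∑ x ∈ range k, f ↑(x + 1) := by
    refine sum_congr rfl fun x hx => ?_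
    have hsum : k + 1 + (k - 1 - x) + (x + 1) = 2 * k + 1 := by
      have := mem_range.1 hx; omega
    rw [← hf]
    congr 1
    rw [neg_eq_iff_add_eq_zero, ← Nat.cast_add, hsum, ZMod.natCast_self]
  rw [ZMod.sum_eq_sum_range, show range (2 * k + 1) = range (k + 1 + k) by congr 1; ring,
    sum_range_add, ← sum_range_reflect (fun x => f ↑(k + 1 + x)), upper_half, sum_range_succ',
    sum_Icc_one_eq_sum_range]
  simp only [Nat.cast_zero, two_nsmul]
  abel

lemma ZMod.sum_sum_two_mul_add_one_of_symm {M : Type*} [AddCommMonoid M] {k : ℕ}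
    (g : ZMod (2 * k + 1) → ZMod (2 * k + 1) → M) (hsym : ∀ x y, g x y = g y x) :
    ∑ x, ∑ y, g x y = ∑ x, g x x + 2 • ∑ x, ∑ h ∈ Icc 1 k, g x (x + h) := by
  set f : ZMod (2 * k + 1) → M := fun d => ∑ x, g x (x + d)
  have hf : f.Even := fun d =>
    Fintype.sum_equiv (Equiv.addRight (-d)) _ _ fun x => by simp [hsym x, ← sub_eq_add_neg]
  have hshift : ∑ x, ∑ y, g x y = ∑ d, f d :=
    calc ∑ x, ∑ y, g x y = ∑ x, ∑ d, g x (x + d) :=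
          sum_congr rfl fun x _ => (Fintype.sum_equiv (Equiv.addLeft x) _ _ fun _ => rfl).symm
      _ = ∑ d, f d := sum_comm
  rw [hshift, hf.sum_zmod_two_mul_add_one, sum_comm]
  simp only [f, add_zero]

lemma cut_eq_sum_sub_sum {m : ℕ} (w : Fin m → Fin m → ℝ) (I : Finset (Fin m)) :
    cut w I = ∑ a ∈ I, ∑ b, w a b - ∑ a ∈ I, ∑ b ∈ I, w a b := by
  rw [cut, ← sum_sub_distrib]
  exact sum_congr rfl fun a _ => eq_sub_of_add_eq (sum_compl_add_sum I _)

lemma cut_insert_sub_cut {m : ℕ} {w : Fin m → Fin m → ℝ} (hsym : ∀ a b, w a b = w b a)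
    {a : Fin m} {I : Finset (Fin m)} (ha : a ∉ I) :
    cut w (insert a I) - cut w I = ∑ b, w a b - w a a - 2 * ∑ b ∈ I, w a b := by
  have hcol : ∑ b ∈ I, w b a = ∑ b ∈ I, w a b := sum_congr rfl fun b _ => hsym b a
  simp only [cut_eq_sum_sub_sum, sum_insert ha, sum_add_distrib, hcol]
  ring

lemma emb_injective (k : ℕ) : Function.Injective (emb k) := fun a b h =>
  ZMod.val_injective _ (by simpa [emb, Fin.ext_iff] using h)

lemma emb_notMem_Qset' (k : ℕ) (i : ZMod (2 * k + 1)) : emb k i ∉ Qset' k i := by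
  simp only [Qset', mem_image, mem_Icc, not_exists, not_and]
  intro h hmem heq
  have hcast : ((h : ℕ) : ZMod (2 * k + 1)) = ((0 : ℕ) : ZMod (2 * k + 1)) := by
    simpa using emb_injective k heq
  have := ZMod.natCast_injOn_Iio _ (by simp; omega) (by simp) hcast
  omega

lemma Qset_eq_insert (k : ℕ) (i : ZMod (2 * k + 1)) :
    Qset k i = insert (emb k i) (Qset' k i) := by
  rw [Qset, Nat.range_succ_eq_Icc_zero, ← insert_Icc_add_one_left_eq_Icc (Nat.zero_le k),
    image_insert, Qset', Nat.cast_zero, add_zero, zero_add]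

lemma sum_Qset' {M : Type*} [AddCommMonoid M] (k : ℕ) (i : ZMod (2 * k + 1))
    (F : Fin (2 * k + 2) → M) : ∑ b ∈ Qset' k i, F b = ∑ h ∈ Icc 1 k, F (emb k (i + h)) :=
  sum_image fun a ha b hb hab => ZMod.natCast_injOn_Iio _
    (by simp at ha ⊢; omega) (by simp at hb ⊢; omega) (add_left_cancel (emb_injective k hab))

lemma cut_Qset_sub_cut_Qset' {k : ℕ} {w : Fin (2 * k + 2) → Fin (2 * k + 2) → ℝ}
    (hsym : ∀ a b, w a b = w b a) (i : ZMod (2 * k + 1)) :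
    cut w (Qset k i) - cut w (Qset' k i) = ∑ b, w (emb k i) b - w (emb k i) (emb k i)
      - 2 * ∑ h ∈ Icc 1 k, w (emb k i) (emb k (i + h)) := by
  rw [Qset_eq_insert, cut_insert_sub_cut hsym (emb_notMem_Qset' k i), sum_Qset']

lemma cut_Nset {k : ℕ} (w : Fin (2 * k + 2) → Fin (2 * k + 2) → ℝ) :
    cut w (Nset k) = ∑ x, ∑ b, w (emb k x) b - ∑ x, ∑ y, w (emb k x) (emb k y) := by
  simp only [cut_eq_sum_sub_sum, Nset, sum_image fun a _ b _ h => emb_injective k h]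

/-- The cyclic holographic entropy inequality holds with equality for
cut functions of weight functions on `m = 2k+2` vertices:
`∑_{i ∈ ZMod (2k+1)} (δ_w(Q_i) − δ_w(Q'_i)) = δ_w(N)`. -/
theorem cyclic_equality_cut (k : ℕ) (w : Fin (2 * k + 2) → Fin (2 * k + 2) → ℝ)
    (hw : IsWeight w) :
    ∑ i : ZMod (2 * k + 1), (cut w (Qset k i) - cut w (Qset' k i)) = cut w (Nset k) := by
  obtain ⟨hsym, -, -⟩ := hw
  calc ∑ i, (cut w (Qset k i) - cut w (Qset' k i))
      = ∑ i, ∑ b, w (emb k i) b - (∑ i, w (emb k i) (emb k i)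
          + 2 * ∑ i, ∑ h ∈ Icc 1 k, w (emb k i) (emb k (i + h))) := by
        simp only [cut_Qset_sub_cut_Qset' hsym, sum_sub_distrib, mul_sum]
        ring
    _ = cut w (Nset k) := by
        rw [cut_Nset, ZMod.sum_sum_two_mul_add_one_of_symm _ fun x y => hsym _ _, two_nsmul]
        ring
end

section
/- Let n ≥ 3. For each subset V ⊆ Fin n with |V| ≥ 3, define the vector e_V in the space of real-valued functions on nonempty subsets of Fin n by e_V(I) = (−1)^{|I|} if I ⊆ V and e_V(I) = 0 otherwise. Then the family {e_V : V ⊆ Fin n, |V| ≥ 3} is linearly independent. -/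
/-- For `n ≥ 3`, the coefficient vectors `e_V` of the multivariate
information equalities, indexed by subsets `V ⊆ Fin n` with `|V| ≥ 3` and living in the
space of real functions on nonempty subsets of `Fin n` (with `e_V(I) = (−1)^{|I|}` if
`I ⊆ V` and `0` otherwise), form a linearly independent family. -/
theorem multivariate_information_linearIndependent (n : ℕ) (hn : 3 ≤ n) :
    LinearIndependent ℝ
      (fun V : {V : Finset (Fin n) // 3 ≤ V.card} =>
        (fun I : {I : Finset (Fin n) // I.Nonempty} =>
          if I.1 ⊆ V.1 then (-1 : ℝ) ^ I.1.card else 0)) := by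
  rw [Fintype.linearIndependent_iff]
  intro g hg
  have main : ∀ V : {V : Finset (Fin n) // 3 ≤ V.card},
      (∀ W : {V : Finset (Fin n) // 3 ≤ V.card}, V.1 ⊂ W.1 → g W = 0) → g V = 0 := by
    intro V hW
    have hVne : V.1.Nonempty := Finset.card_pos.mp (by omega)
    have h0 := congrFun hg ⟨V.1, hVne⟩
    simp only [Finset.sum_apply, Pi.smul_apply, smul_eq_mul, Pi.zero_apply] at h0
    have h1 : ∑ W : {V : Finset (Fin n) // 3 ≤ V.card},
        g W * (if V.1 ⊆ W.1 then (-1 : ℝ) ^ V.1.card else 0)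
        = g V * (-1 : ℝ) ^ V.1.card := by
      rw [Fintype.sum_eq_single V]
      · simp
      · intro W hWV
        by_cases h : V.1 ⊆ W.1
        · have : V.1 ⊂ W.1 := lt_of_le_of_ne h (fun he => hWV (Subtype.ext he.symm))
          rw [hW W this]; ring
        · simp [h]
    rw [h1] at h0
    have : (-1 : ℝ) ^ V.1.card ≠ 0 := by positivity
    exact (mul_eq_zero.mp h0).resolve_right this
  suffices h : ∀ m : ℕ, ∀ V : {V : Finset (Fin n) // 3 ≤ V.card}, n - V.1.card ≤ m → g V = 0 by
    intro V; exact h n V (Nat.sub_le _ _)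
  intro m
  induction m with
  | zero =>
    intro V hV
    apply main
    intro W hsub
    have h1 := Finset.card_lt_card hsub
    have h2 : W.1.card ≤ n := by
      simpa using Finset.card_le_univ W.1
    omega
  | succ m ih =>
    intro V hV
    apply main
    intro W hsub
    have h1 := Finset.card_lt_card hsub
    have h2 : W.1.card ≤ n := by
      simpa using Finset.card_le_univ W.1
    exact ih W (by omega)
end

section
/- Let n ≥ 1. For distinct i, j ∈ Fin (n+1), let b_{ij} ∈ ℝ^(2^n − 1) be the vector indexed by nonempty subsets I ⊆ Fin n whose I-th coordinate is 1 if exactly one of i and j lies in I (where I is viewed as a subset of Fin (n+1) via the natural embedding) and 0 otherwise. Then the (n+1 choose 2) vectors b_{ij} are linearly independent. -/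
/-- The Bell entropy vector `b_{ij}` for `i, j ∈ Fin (n+1)`, recorded on the nonempty
subsets `I ⊆ Fin n` (viewed inside `Fin (n+1)` via the natural embedding `Fin.castSucc`):
its `I`-th coordinate is `1` if exactly one of `i, j` lies in `I`, and `0` otherwise. -/
def bellVec (n : ℕ) (i j : Fin (n + 1)) : {I : Finset (Fin n) // I.Nonempty} → ℝ :=
  fun I =>
    if Xor (i ∈ I.1.map ⟨Fin.castSucc, Fin.castSucc_injective n⟩)
        (j ∈ I.1.map ⟨Fin.castSucc, Fin.castSucc_injective n⟩) then 1 else 0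

/-!
The mutual information `I(k:l) = S(k) + S(l) - S(kl)` of the Bell pair vector `b_{ij}` is `2`
when `{i, j} = {k, l}` and `0` otherwise, so the mutual informations form a family of linear
functionals dual (up to the factor `2`) to the Bell pair vectors. They need the entropies of
subsets containing the purifier, which purity recovers from the recorded ones through
`S(J) = S(Jᶜ)`; this reconstruction is linear.
-/

section BellEntropy

variable (R : Type*) {α : Type*} [DecidableEq α]

def bellEntropy [Zero R] [One R] (i j : α) (J : Finset α) : R :=
  if Xor (i ∈ J) (j ∈ J) then 1 else 0

def mutualInfo [Ring R] (k l : α) : (Finset α → R) →ₗ[R] R :=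
  let S : Finset α → (Finset α → R) →ₗ[R] R := LinearMap.proj
  S {k} + S {l} - S {k, l}

variable {R}

lemma bellEntropy_empty [Zero R] [One R] (i j : α) : bellEntropy R i j ∅ = 0 := by
  simp [bellEntropy]

lemma bellEntropy_compl [Zero R] [One R] [Fintype α] (i j : α) (J : Finset α) :
    bellEntropy R i j Jᶜ = bellEntropy R i j J := by
  simp only [bellEntropy, Finset.mem_compl, xor_not_not]

lemma mutualInfo_bellEntropy [Ring R] {i j k l : α} (hij : i ≠ j) (hkl : k ≠ l) :
    mutualInfo R k l (bellEntropy R i j) = if s(i, j) = s(k, l) then 2 else 0 := by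
  simp only [mutualInfo, bellEntropy, LinearMap.sub_apply, LinearMap.add_apply,
    LinearMap.proj_apply, Finset.mem_insert, Finset.mem_singleton, Sym2.eq_iff]
  by_cases hik : i = k <;> by_cases hil : i = l <;> by_cases hjk : j = k <;>
    by_cases hjl : j = l <;> simp_all <;> norm_num

end BellEntropy

section Ordered

variable (R : Type*) [Ring R] {α : Type*} [LinearOrder α]

def mutualInfoOfPairs : (Finset α → R) →ₗ[R] ({p : α × α // p.1 < p.2} → R) :=
  LinearMap.pi fun p ↦ mutualInfo R p.1.1 p.1.2

variable {R}

lemma sym2_mk_eq_mk_iff_of_lt {p q : α × α} (hp : p.1 < p.2) (hq : q.1 < q.2) :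
    s(p.1, p.2) = s(q.1, q.2) ↔ p = q := by
  rw [Sym2.eq_iff, Prod.ext_iff]
  constructor
  · rintro (h | ⟨h₁, h₂⟩)
    · exact h
    · exact absurd (h₁ ▸ h₂ ▸ hp) (not_lt.2 hq.le)
  · exact Or.inl

lemma mutualInfoOfPairs_bellEntropy (q : {p : α × α // p.1 < p.2}) :
    mutualInfoOfPairs R (bellEntropy R q.1.1 q.1.2) = Pi.single q 2 := by
  ext p
  rw [mutualInfoOfPairs, LinearMap.pi_apply, mutualInfo_bellEntropy q.2.ne p.2.ne,
    Pi.single_apply]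
  simp only [sym2_mk_eq_mk_iff_of_lt q.2 p.2, ← Subtype.ext_iff, eq_comm]

theorem linearIndependent_bellEntropy [IsDomain R] [NeZero (2 : R)] :
    LinearIndependent R fun p : {p : α × α // p.1 < p.2} ↦ bellEntropy R p.1.1 p.1.2 := by
  refine LinearIndependent.of_comp (mutualInfoOfPairs R) ?_
  convert Pi.linearIndependent_single_of_ne_zero (R := R) (M := R) (fun _ ↦ two_ne_zero)
    using 1
  exact funext mutualInfoOfPairs_bellEntropy

end Ordered

section Purification

variable (R : Type*) (n : ℕ)

/-- Of `J` and `Jᶜ`, which have the same entropy in a pure state, the one avoiding the purifier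
`Fin.last n`, read as a subset of `Fin n`. -/
def purifiedPart (J : Finset (Fin (n + 1))) : Finset (Fin n) :=
  {a | a.castSucc ∈ if Fin.last n ∈ J then Jᶜ else J}

def purify [Semiring R] :
    ({I : Finset (Fin n) // I.Nonempty} → R) →ₗ[R] (Finset (Fin (n + 1)) → R) :=
  LinearMap.pi fun J ↦ if h : (purifiedPart n J).Nonempty then LinearMap.proj ⟨_, h⟩ else 0

variable {R n}

lemma map_castSuccEmb_filter_castSucc_mem {K : Finset (Fin (n + 1))} (hK : Fin.last n ∉ K) :
    ({a | a.castSucc ∈ K} : Finset (Fin n)).map Fin.castSuccEmb = K := by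
  ext x
  induction x using Fin.lastCases with
  | last => simpa [Fin.castSucc_ne_last] using hK
  | cast a => simp

lemma bellEntropy_map_purifiedPart [Zero R] [One R] (i j : Fin (n + 1))
    (J : Finset (Fin (n + 1))) :
    bellEntropy R i j ((purifiedPart n J).map Fin.castSuccEmb) = bellEntropy R i j J := by
  unfold purifiedPart
  split_ifs with hJ
  · rw [map_castSuccEmb_filter_castSucc_mem (Finset.notMem_compl.2 hJ), bellEntropy_compl]
  · rw [map_castSuccEmb_filter_castSucc_mem hJ]

lemma purify_bellVec (i j : Fin (n + 1)) : purify ℝ n (bellVec n i j) = bellEntropy ℝ i j := by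
  ext J
  rw [← bellEntropy_map_purifiedPart]
  simp only [purify, LinearMap.pi_apply]
  split_ifs with h
  · rfl
  · rw [Finset.not_nonempty_iff_eq_empty.1 h, Finset.map_empty, bellEntropy_empty,
      LinearMap.zero_apply]

end Purification

theorem bellVec_linearIndependent_general (n : ℕ) :
    LinearIndependent ℝ
      (fun p : {p : Fin (n + 1) × Fin (n + 1) // p.1 < p.2} =>
        bellVec n p.1.1 p.1.2) := by
  refine LinearIndependent.of_comp (purify ℝ n) ?_
  simpa only [Function.comp_def, purify_bellVec] using linearIndependent_bellEntropy

/-- For `n ≥ 1`, the `(n+1 choose 2)` Bell vectors `b_{ij}`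
(for distinct `i, j ∈ Fin (n+1)`) are linearly independent. -/
theorem bellVec_linearIndependent (n : ℕ) (hn : 1 ≤ n) :
    LinearIndependent ℝ
      (fun p : {p : Fin (n + 1) × Fin (n + 1) // p.1 < p.2} =>
        bellVec n p.1.1 p.1.2) :=
  bellVec_linearIndependent_general n
end

section
/- Let n ≥ 1. The linear span of the (n+1 choose 2) Bell vectors b_{ij} (distinct i, j ∈ Fin (n+1), restricted to coordinates indexed by nonempty subsets of Fin n) equals the linear subspace of ℝ^(2^n − 1) consisting of all vectors s satisfying ∑_{I ⊆ V} (−1)^{|I|} s(I) = 0 for every V ⊆ Fin n with |V| ≥ 3 (where s(∅) is taken to be 0); in particular this subspace has dimension n + (n choose 2) = (n+1 choose 2). -/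
/-!
The indicators `g s = (I ↦ [s ⊆ I])` of the nonempty sets `s` form a basis of the functions on
nonempty subsets, and Möbius inversion on the Boolean lattice shows that the coordinate of `x`
along `g V` is `(-1)^|V|` times the multivariate information of `x` on `V`. So the equalities for
`|V| ≥ 3` cut out exactly the span of the `g s` with `|s| ≤ 2`, a space of dimension
`n + (n choose 2)`. That is also the span of the Bell vectors, because `b_{i,n} = g {i}` and
`b_{ij} = g {i} + g {j} - 2 g {i, j}` for `i, j < n`.
-/

open Finset

theorem Module.Basis.finrank_span_image {ι R M : Type*} [Ring R] [Nontrivial R]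
    [StrongRankCondition R] [AddCommGroup M] [Module R M] (b : Module.Basis ι R M) (S : Set ι)
    [Fintype S] : Module.finrank R (Submodule.span R (b '' S)) = Fintype.card S := by
  rw [Set.image_eq_range]
  exact finrank_span_eq_card (b.linearIndependent.comp _ Subtype.val_injective)

section AlternatingSum

variable {α R : Type*} [CommRing R]

def alternatingSum (V : Finset α) : (Finset α → R) →ₗ[R] R :=
  ∑ I ∈ V.powerset, (-1 : R) ^ I.card • LinearMap.proj I

@[simp]
theorem alternatingSum_apply (V : Finset α) (f : Finset α → R) :
    alternatingSum V f = ∑ I ∈ V.powerset, (-1) ^ I.card * f I := by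
  simp [alternatingSum]

variable [DecidableEq α]

theorem sum_Icc_neg_one_pow_card (s t : Finset α) :
    ∑ I ∈ Icc s t, (-1 : R) ^ I.card = if s = t then (-1) ^ s.card else 0 := by
  by_cases hst : s ⊆ t
  · have hdisj : ∀ J ∈ (t \ s).powerset, Disjoint s J := fun J hJ =>
      disjoint_sdiff.mono_right (mem_powerset.1 hJ)
    have hpow : ∑ J ∈ (t \ s).powerset, (-1 : R) ^ J.card = if s = t then 1 else 0 := by
      have := congrArg (Int.cast : ℤ → R) (sum_powerset_neg_one_pow_card (x := t \ s))
      push_cast at this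
      rw [this]
      exact if_congr (sdiff_eq_empty_iff_subset.trans ⟨subset_antisymm hst, fun h => h ▸ subset_rfl⟩)
        rfl rfl
    rw [Icc_eq_image_powerset hst, sum_image fun I hI J hJ h => by
      rw [← union_sdiff_cancel_left (hdisj I hI), h, union_sdiff_cancel_left (hdisj J hJ)]]
    calc ∑ J ∈ (t \ s).powerset, (-1 : R) ^ (s ∪ J).card
        = ∑ J ∈ (t \ s).powerset, (-1) ^ s.card * (-1) ^ J.card :=
          sum_congr rfl fun J hJ => by rw [card_union_of_disjoint (hdisj J hJ), pow_add]
      _ = _ := by rw [← mul_sum, hpow, mul_ite, mul_one, mul_zero]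
  · rw [Icc_eq_empty (by simpa using hst), sum_empty, if_neg (by rintro rfl; exact hst subset_rfl)]

theorem sum_powerset_neg_one_pow_card_mul_alternatingSum (f : Finset α → R) (I : Finset α) :
    ∑ V ∈ I.powerset, (-1) ^ V.card * alternatingSum V f = f I := by
  simp only [alternatingSum_apply, mul_sum]
  rw [sum_comm' (t' := I.powerset) (s' := fun J => Icc J I) fun V J => by
    simp only [mem_powerset, mem_Icc]
    exact ⟨fun ⟨hVI, hJV⟩ => ⟨⟨hJV, hVI⟩, hJV.trans hVI⟩, fun ⟨⟨hJV, hVI⟩, _⟩ => ⟨hVI, hJV⟩⟩]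
  calc ∑ J ∈ I.powerset, ∑ V ∈ Icc J I, (-1) ^ V.card * ((-1) ^ J.card * f J)
      = ∑ J ∈ I.powerset, if J = I then f I else 0 := sum_congr rfl fun J _ => by
        rw [← sum_mul, sum_Icc_neg_one_pow_card]
        split_ifs with hJI
        · rw [hJI, ← mul_assoc, pow_mul_pow_eq_one _ (by norm_num), one_mul]
        · rw [zero_mul]
    _ = f I := by rw [sum_ite_eq' _ _ _, if_pos (mem_powerset_self I)]

end AlternatingSum

section NonemptySubsets

variable (R : Type*) {α : Type*} [CommRing R]

def extendByZero : ({I : Finset α // I.Nonempty} → R) →ₗ[R] Finset α → R :=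
  LinearMap.pi fun I => if h : I.Nonempty then LinearMap.proj ⟨I, h⟩ else 0

def multivariateInfo (V : Finset α) : ({I : Finset α // I.Nonempty} → R) →ₗ[R] R :=
  alternatingSum V ∘ₗ extendByZero R

variable {R}

theorem extendByZero_apply (x : {I : Finset α // I.Nonempty} → R) (I : Finset α) :
    extendByZero R x I = if h : I.Nonempty then x ⟨I, h⟩ else 0 := by
  by_cases h : I.Nonempty <;> simp [extendByZero, h]

theorem multivariateInfo_apply (V : Finset α) (x : {I : Finset α // I.Nonempty} → R) :
    multivariateInfo R V x =
      ∑ I ∈ V.powerset, (-1) ^ I.card * (if h : I.Nonempty then x ⟨I, h⟩ else 0) := by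
  simp [multivariateInfo, extendByZero_apply]

theorem multivariateInfo_empty (x : {I : Finset α // I.Nonempty} → R) :
    multivariateInfo R ∅ x = 0 := by
  simp [multivariateInfo_apply]

variable [DecidableEq α]

def supersetIndicator (s : Finset α) : {I : Finset α // I.Nonempty} → R :=
  fun I => if s ⊆ I.1 then 1 else 0

theorem extendByZero_supersetIndicator {s : Finset α} (hs : s.Nonempty) :
    extendByZero R (supersetIndicator s) = fun I => if s ⊆ I then 1 else 0 := by
  funext I
  by_cases hsI : s ⊆ I
  · simp [extendByZero_apply, supersetIndicator, hsI, hs.mono hsI]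
  · simp [extendByZero_apply, supersetIndicator, hsI]

theorem multivariateInfo_supersetIndicator (V : Finset α) {s : Finset α} (hs : s.Nonempty) :
    multivariateInfo R V (supersetIndicator s) = if s = V then (-1) ^ s.card else 0 := by
  rw [multivariateInfo, LinearMap.comp_apply, extendByZero_supersetIndicator hs,
    alternatingSum_apply]
  simp only [mul_ite, mul_one, mul_zero, ← sum_filter]
  rw [show {I ∈ V.powerset | s ⊆ I} = Icc s V by ext; simp [and_comm],
    sum_Icc_neg_one_pow_card]

theorem linearIndependent_supersetIndicator :
    LinearIndependent R fun s : {I : Finset α // I.Nonempty} => supersetIndicator (R := R) s.1 := by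
  let coord : ({I : Finset α // I.Nonempty} → R) →ₗ[R] {I : Finset α // I.Nonempty} → R :=
    LinearMap.pi fun V => (-1 : R) ^ V.1.card • multivariateInfo R V.1
  refine LinearIndependent.of_comp coord ?_
  convert Pi.linearIndependent_single_one {I : Finset α // I.Nonempty} R with s
  funext V
  simp only [coord, Function.comp_apply, LinearMap.pi_apply, LinearMap.smul_apply, smul_eq_mul,
    multivariateInfo_supersetIndicator _ s.2, Pi.single_apply, Subtype.ext_iff, eq_comm (a := V)]
  split_ifs with h
  · rw [h, ← mul_pow]; norm_num
  · rw [mul_zero]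

variable [Fintype α]

theorem sum_multivariateInfo_smul_supersetIndicator (x : {I : Finset α // I.Nonempty} → R) :
    ∑ s : {I : Finset α // I.Nonempty},
      ((-1) ^ s.1.card * multivariateInfo R s.1 x) • supersetIndicator s.1 = x := by
  funext I
  simp only [Finset.sum_apply, Pi.smul_apply, smul_eq_mul, supersetIndicator, mul_ite, mul_one,
    mul_zero]
  rw [← sum_subtype {V : Finset α | V.Nonempty} (by simp)
      (fun V => if V ⊆ I.1 then (-1) ^ V.card * multivariateInfo R V x else 0),
    sum_filter_of_ne fun V _ hV => ?_, ← sum_filter, filter_subset_univ]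
  · simp only [multivariateInfo, LinearMap.comp_apply]
    rw [sum_powerset_neg_one_pow_card_mul_alternatingSum, extendByZero_apply, dif_pos I.2]
  · rw [nonempty_iff_ne_empty]
    rintro rfl
    simp [multivariateInfo_empty] at hV

variable (R α) in
noncomputable def supersetIndicatorBasis :
    Module.Basis {I : Finset α // I.Nonempty} R ({I : Finset α // I.Nonempty} → R) :=
  Module.Basis.mk linearIndependent_supersetIndicator fun x _ => by
    rw [← sum_multivariateInfo_smul_supersetIndicator x]
    exact sum_mem fun s _ => Submodule.smul_mem _ _ (Submodule.subset_span ⟨s, rfl⟩)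

@[simp]
theorem supersetIndicatorBasis_apply (s : {I : Finset α // I.Nonempty}) :
    supersetIndicatorBasis R α s = supersetIndicator s.1 :=
  Module.Basis.mk_apply ..

theorem supersetIndicatorBasis_repr_apply (x : {I : Finset α // I.Nonempty} → R)
    (V : {I : Finset α // I.Nonempty}) :
    (supersetIndicatorBasis R α).repr x V = (-1) ^ V.1.card * multivariateInfo R V.1 x := by
  have := (supersetIndicatorBasis R α).repr_sum_self
    fun s => (-1) ^ s.1.card * multivariateInfo R s.1 x
  simp only [supersetIndicatorBasis_apply, sum_multivariateInfo_smul_supersetIndicator] at this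
  exact congrFun this V

theorem mem_span_supersetIndicatorBasis_image_iff (S : Set {I : Finset α // I.Nonempty})
    (x : {I : Finset α // I.Nonempty} → R) :
    x ∈ Submodule.span R (supersetIndicatorBasis R α '' S) ↔
      ∀ V ∉ S, multivariateInfo R V.1 x = 0 := by
  simp only [Module.Basis.mem_span_image, Set.subset_def, Finset.mem_coe, Finsupp.mem_support_iff,
    ne_eq, supersetIndicatorBasis_repr_apply, ((isUnit_neg_one (α := R)).pow _).mul_right_eq_zero]
  exact forall_congr' fun V => not_imp_comm

theorem card_nonempty_card_le_two :
    Fintype.card ({s | s.1.card ≤ 2} : Set {I : Finset α // I.Nonempty}) =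
      Fintype.card α + (Fintype.card α).choose 2 := by
  have hsplit : ({I | I.Nonempty ∧ I.card ≤ 2} : Finset (Finset α)) =
      powersetCard 1 univ ∪ powersetCard 2 univ := by
    ext I
    simp only [mem_filter, mem_univ, true_and, mem_union, mem_powersetCard_univ, ← card_pos]
    omega
  simp only [Set.coe_ofPred]
  rw [Fintype.card_congr (Equiv.subtypeSubtypeEquivSubtypeInter (fun I : Finset α => I.Nonempty)
      (fun I => I.card ≤ 2)),
    Fintype.card_subtype, hsplit,
    card_union_of_disjoint (pairwise_disjoint_powersetCard _ (by norm_num)),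
    card_powersetCard, card_powersetCard, card_univ, Nat.choose_one_right]

end NonemptySubsets

section Bell

open Submodule

variable {n : ℕ}

theorem bellVec_comm (i j : Fin (n + 1)) : bellVec n i j = bellVec n j i := by
  funext I
  simp only [bellVec, xor_comm]

theorem bellVec_castSucc_last (i : Fin n) :
    bellVec n i.castSucc (Fin.last n) = supersetIndicator {i} := by
  funext I
  by_cases hi : i ∈ I.1 <;> simp [bellVec, supersetIndicator, hi]

theorem bellVec_castSucc_castSucc (i j : Fin n) :
    bellVec n i.castSucc j.castSucc =
      supersetIndicator {i} + supersetIndicator {j} - (2 : ℝ) • supersetIndicator {i, j} := by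
  funext I
  by_cases hi : i ∈ I.1 <;> by_cases hj : j ∈ I.1 <;>
    norm_num [bellVec, supersetIndicator, Xor, hi, hj, insert_subset_iff]

theorem bellVec_mem_span {i j : Fin (n + 1)} (hij : i ≠ j) :
    bellVec n i j ∈ span ℝ (Set.range fun p : {p : Fin (n + 1) × Fin (n + 1) // p.1 < p.2} =>
      bellVec n p.1.1 p.1.2) := by
  rcases hij.lt_or_gt with h | h
  · exact subset_span ⟨⟨(i, j), h⟩, rfl⟩
  · rw [bellVec_comm]
    exact subset_span ⟨⟨(j, i), h⟩, rfl⟩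

theorem supersetIndicator_mem_span_bellVec {s : Finset (Fin n)} (hs : s.Nonempty)
    (hcard : s.card ≤ 2) :
    supersetIndicator s ∈ span ℝ (Set.range fun p : {p : Fin (n + 1) × Fin (n + 1) // p.1 < p.2} =>
      bellVec n p.1.1 p.1.2) := by
  have singleton_mem (i : Fin n) : supersetIndicator {i} ∈ span ℝ (Set.range
      fun p : {p : Fin (n + 1) × Fin (n + 1) // p.1 < p.2} => bellVec n p.1.1 p.1.2) := by
    rw [← bellVec_castSucc_last]
    exact bellVec_mem_span (Fin.castSucc_lt_last i).ne
  obtain hs1 | hs2 : s.card = 1 ∨ s.card = 2 := by have := hs.card_pos; omega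
  · obtain ⟨i, rfl⟩ := card_eq_one.1 hs1
    exact singleton_mem i
  · obtain ⟨i, j, hij, rfl⟩ := card_eq_two.1 hs2
    have hpair : (2 : ℝ) • supersetIndicator {i, j} =
        supersetIndicator {i} + supersetIndicator {j} - bellVec n i.castSucc j.castSucc := by
      rw [bellVec_castSucc_castSucc]; abel
    rw [← smul_mem_iff _ (two_ne_zero (α := ℝ)), hpair]
    exact sub_mem (add_mem (singleton_mem i) (singleton_mem j))
      (bellVec_mem_span ((Fin.castSucc_injective n).ne hij))

theorem span_bellVec_eq (n : ℕ) :
    span ℝ (Set.range fun p : {p : Fin (n + 1) × Fin (n + 1) // p.1 < p.2} =>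
      bellVec n p.1.1 p.1.2) =
      span ℝ (supersetIndicatorBasis ℝ (Fin n) '' {s | s.1.card ≤ 2}) := by
  refine le_antisymm (span_le.2 ?_) (span_le.2 ?_)
  · have small_mem {s : Finset (Fin n)} (hs : s.Nonempty) (hcard : s.card ≤ 2) :
        supersetIndicator s ∈ span ℝ (supersetIndicatorBasis ℝ (Fin n) '' {s | s.1.card ≤ 2}) :=
      subset_span ⟨⟨s, hs⟩, hcard, supersetIndicatorBasis_apply _⟩
    rintro _ ⟨⟨⟨p, q⟩, hpq⟩, rfl⟩
    obtain ⟨i, rfl⟩ := Fin.exists_castSucc_eq.2 (hpq.trans_le (Fin.le_last q)).ne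
    rcases Fin.eq_castSucc_or_eq_last q with ⟨j, rfl⟩ | rfl <;> dsimp only
    · rw [bellVec_castSucc_castSucc]
      exact sub_mem (add_mem (small_mem (singleton_nonempty i) (by simp))
        (small_mem (singleton_nonempty j) (by simp)))
        (smul_mem _ _ (small_mem (insert_nonempty i {j}) card_le_two))
    · rw [bellVec_castSucc_last]
      exact small_mem (singleton_nonempty i) (by simp)
  · rintro _ ⟨⟨s, hs⟩, hcard, rfl⟩
    rw [supersetIndicatorBasis_apply]
    exact supersetIndicator_mem_span_bellVec hs hcard

end Bell

theorem bellVec_span_eq_multivariate_subspace_general (n : ℕ) :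
    ((Submodule.span ℝ (Set.range (fun p : {p : Fin (n + 1) × Fin (n + 1) // p.1 < p.2} =>
        bellVec n p.1.1 p.1.2)) : Submodule ℝ ({I : Finset (Fin n) // I.Nonempty} → ℝ)) :
        Set ({I : Finset (Fin n) // I.Nonempty} → ℝ)) =
      {s | ∀ V : Finset (Fin n), 3 ≤ V.card →
        ∑ I ∈ V.powerset,
          (-1 : ℝ) ^ I.card * (if h : I.Nonempty then s ⟨I, h⟩ else 0) = 0} ∧
    Module.finrank ℝ
        (Submodule.span ℝ (Set.range (fun p : {p : Fin (n + 1) × Fin (n + 1) // p.1 < p.2} =>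
          bellVec n p.1.1 p.1.2))) = n + n.choose 2 ∧
    n + n.choose 2 = (n + 1).choose 2 := by
  rw [span_bellVec_eq]
  refine ⟨?_, ?_, ?_⟩
  · ext x
    simp only [SetLike.mem_coe, mem_span_supersetIndicatorBasis_image_iff, Set.mem_ofPred_eq,
      not_le, multivariateInfo_apply]
    exact ⟨fun h V hV => h ⟨V, card_pos.1 (by omega)⟩ hV, fun h V hV => h V.1 hV⟩
  · rw [Module.Basis.finrank_span_image, card_nonempty_card_le_two, Fintype.card_fin]
  · rw [Nat.choose_succ_succ', Nat.choose_one_right]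

/-- The linear span of the `(n+1 choose 2)` Bell vectors equals the
subspace of `ℝ^(2^n − 1)` cut out by the multivariate information equalities
`∑_{I ⊆ V} (−1)^{|I|} s(I) = 0` for all `V ⊆ Fin n` with `|V| ≥ 3` (taking `s(∅) = 0`);
in particular this subspace has dimension `n + (n choose 2) = (n+1 choose 2)`. -/
theorem bellVec_span_eq_multivariate_subspace (n : ℕ) (hn : 1 ≤ n) :
    ((Submodule.span ℝ (Set.range (fun p : {p : Fin (n + 1) × Fin (n + 1) // p.1 < p.2} =>
        bellVec n p.1.1 p.1.2)) : Submodule ℝ ({I : Finset (Fin n) // I.Nonempty} → ℝ)) :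
        Set ({I : Finset (Fin n) // I.Nonempty} → ℝ)) =
      {s | ∀ V : Finset (Fin n), 3 ≤ V.card →
        ∑ I ∈ V.powerset,
          (-1 : ℝ) ^ I.card * (if h : I.Nonempty then s ⟨I, h⟩ else 0) = 0} ∧
    Module.finrank ℝ
        (Submodule.span ℝ (Set.range (fun p : {p : Fin (n + 1) × Fin (n + 1) // p.1 < p.2} =>
          bellVec n p.1.1 p.1.2))) = n + n.choose 2 ∧
    n + n.choose 2 = (n + 1).choose 2 :=
  bellVec_span_eq_multivariate_subspace_general n
end
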